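/- arXiv:1912.12383 — 5 statements merged into one kernel-verified Lean document; each statement's English description precedes it below -/
import Mathlib

section
/- Let V be a finite set of n nodes, p : V → ℝ a true-value function, p̂ : V → ℝ an estimate function, and let v_1, …, v_n be an enumeration of V with p(v_1) ≥ p(v_2) ≥ … ≥ p(v_n). Let 1 ≤ k ≤ n, let ε > 0, and suppose that for all indices i, j with 1 ≤ i ≤ k < j ≤ n, p(v_i) − p(v_j) ≥ ε implies p̂(v_i) > p̂(v_j). Then every subset R ⊆ V with |R| = k satisfying p̂(u) ≥ p̂(w) for all u ∈ R and w ∈ V \ R (i.e., R is a top-k set by estimated value) satisfies: (1) for every v ∈ R, p(v) ≥ p(v_k) − ε; and (2) for every v ∈ V \ R, p(v) < p(v_k) + ε. -/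
/-- Deterministic core of Theorem 4 of the paper: if the estimator `phat`
correctly orders every pair consisting of a true top-`k` node and a true
non-top-`k` node whose true values differ by at least `ε`, then any set `R`
of `k` nodes with the largest estimated values satisfies both conditions of
an `(ε, δ)`-approximation. Nodes are enumerated as `v 0, …, v (n-1)` in
non-increasing order of true value, so `v ⟨k-1, _⟩` is the `k`-th node. -/
theorem stmt1
    {V : Type*} [Fintype V] [DecidableEq V] (n : ℕ) (hn : Fintype.card V = n)
    (p phat : V → ℝ) (v : Fin n → V) (hbij : Function.Bijective v)
    (hsorted : ∀ i j : Fin n, i ≤ j → p (v j) ≤ p (v i))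
    (k : ℕ) (hk : 1 ≤ k) (hkn : k ≤ n)
    (ε : ℝ) (hε : 0 < ε)
    (hpairs : ∀ i j : Fin n, (i : ℕ) < k → k ≤ (j : ℕ) →
      ε ≤ p (v i) - p (v j) → phat (v j) < phat (v i))
    (R : Finset V) (hRcard : R.card = k)
    (hRtop : ∀ u ∈ R, ∀ w ∉ R, phat w ≤ phat u) :
    (∀ x ∈ R, p (v ⟨k - 1, by omega⟩) - ε ≤ p x) ∧
    (∀ x ∉ R, p x < p (v ⟨k - 1, by omega⟩) + ε) := by
  set km : Fin n := ⟨k - 1, by omega⟩ with hkm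
  set T : Finset (Fin n) := Finset.univ.filter (fun i : Fin n => (i : ℕ) < k) with hT
  have hTcard : T.card = k := by
    have : T = Finset.map ⟨Fin.castLE hkn, Fin.castLE_injective hkn⟩ Finset.univ := by
      ext i
      simp only [hT, Finset.mem_filter, Finset.mem_univ, true_and, Finset.mem_map,
        Function.Embedding.coeFn_mk]
      constructor
      · intro hi; exact ⟨⟨(i : ℕ), hi⟩, Fin.ext rfl⟩
      · rintro ⟨j, rfl⟩; exact j.isLt
    simp [this]
  constructor
  · intro x hx
    by_contra hcon
    push_neg at hcon
    obtain ⟨j, rfl⟩ := hbij.surjective x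
    -- j must be ≥ k
    have hjk : k ≤ (j : ℕ) := by
      by_contra hjl
      push_neg at hjl
      have : p (v km) ≤ p (v j) := hsorted j km (show (j:ℕ) ≤ k-1 by omega)
      linarith
    -- every top-k index is in R
    have hTin : ∀ i ∈ T, v i ∈ R := by
      intro i hi
      simp only [hT, Finset.mem_filter] at hi
      have hlt : phat (v j) < phat (v i) := by
        apply hpairs i j hi.2 hjk
        have h1 : p (v km) ≤ p (v i) := hsorted i km (show (i:ℕ) ≤ k-1 by omega)
        linarith
      by_contra hnot
      exact absurd (hRtop (v j) hx (v i) hnot) (not_le.mpr hlt)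
    have hsub : Finset.image v T ∪ {v j} ⊆ R := by
      intro y hy
      rcases Finset.mem_union.mp hy with hy | hy
      · obtain ⟨i, hi, rfl⟩ := Finset.mem_image.mp hy
        exact hTin i hi
      · simpa using Finset.mem_singleton.mp hy ▸ hx
    have hdisj : v j ∉ Finset.image v T := by
      intro hmem
      obtain ⟨i, hi, hij⟩ := Finset.mem_image.mp hmem
      simp only [hT, Finset.mem_filter] at hi
      have := hbij.injective hij
      omega
    have hcard : (Finset.image v T ∪ {v j}).card = k + 1 := by
      rw [Finset.card_union_of_disjoint (by simp [hdisj]),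
        Finset.card_image_of_injective _ hbij.injective, hTcard, Finset.card_singleton]
    have := Finset.card_le_card hsub
    omega
  · intro x hx
    by_contra hcon
    push_neg at hcon
    obtain ⟨j, rfl⟩ := hbij.surjective x
    -- j must be < k
    have hjk : (j : ℕ) < k := by
      by_contra hjl
      push_neg at hjl
      have : p (v j) ≤ p (v km) := hsorted km j (show k-1 ≤ (j:ℕ) by omega)
      linarith
    -- every non-top-k index is not in R
    have hR : ∀ i : Fin n, k ≤ (i : ℕ) → v i ∉ R := by
      intro i hi hmem
      have hlt : phat (v i) < phat (v j) := by
        apply hpairs j i hjk hi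
        have h1 : p (v i) ≤ p (v km) := hsorted km i (show k-1 ≤ (i:ℕ) by omega)
        linarith
      exact absurd (hRtop (v i) hmem (v j) hx) (not_le.mpr hlt)
    have hsub : R ⊆ (Finset.image v T).erase (v j) := by
      intro y hy
      obtain ⟨i, rfl⟩ := hbij.surjective y
      refine Finset.mem_erase.mpr ⟨?_, ?_⟩
      · rintro h
        exact hx (hbij.injective h ▸ hy)
      · refine Finset.mem_image.mpr ⟨i, ?_, rfl⟩
        simp only [hT, Finset.mem_filter, Finset.mem_univ, true_and]
        by_contra h
        exact hR i (by omega) hy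
    have hcard : ((Finset.image v T).erase (v j)).card = k - 1 := by
      rw [Finset.card_erase_of_mem, Finset.card_image_of_injective _ hbij.injective, hTcard]
      exact Finset.mem_image.mpr ⟨j, by simp [hT, hjk], rfl⟩
    have := Finset.card_le_card hsub
    omega
end

section
/- Let V be a finite set of n nodes, let 1 ≤ k < n, let p : V → [0,1], and let ε, δ ∈ (0,1). On a probability space, let X_1, …, X_t be independent, identically distributed measurable maps from Ω to [0,1]^V with E[X_i(v)] = p(v) for every node v and every i, and define the estimator p̂(v) = (1/t)·Σ_{i=1}^t X_i(v). If t ≥ (2/ε²)·ln(k·(n−k)/δ), then with probability at least 1 − δ the following holds: every subset R ⊆ V with |R| = k satisfying p̂(u) ≥ p̂(w) for all u ∈ R and w ∈ V \ R satisfies (1) p(v) ≥ P^k − ε for all v ∈ R, and (2) p(v) < P^k + ε for all v ∈ V \ R, where P^k is the k-th largest value of p over V. -/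
/-!
Let `T` be a set of `k` nodes with the `k` largest true probabilities. If the empirical scores
rank correctly every pair `(u, w) ∈ T × Tᶜ` with `p u - p w ≥ ε`, then any `k` nodes with the
largest scores are `ε`-close to the true top `k`: a node `v ∈ R` with `p v < P^k - ε` lies outside
`T`, so some `u ∈ T` was pushed out of `R` by `v`, a misranked `ε`-separated pair, and symmetrically
for nodes outside `R`. By Hoeffding's inequality for the differences `X_i u - X_i w ∈ [-1, 1]`,
each such pair is misranked with probability at most `exp (-t ε² / 2) ≤ δ / (k (n - k))`, and there
are at most `k (n - k)` pairs.
-/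

open MeasureTheory ProbabilityTheory

/-- The `k`-th largest value attained by `f` on the finite type `V`
(the `k`-th entry, 1-indexed, of the list of values of `f` sorted in
non-increasing order). -/
noncomputable def kthLargest {V : Type*} [Fintype V] (f : V → ℝ) (k : ℕ) : ℝ :=
  ((Finset.univ.val.map f).sort (· ≥ ·)).getD (k - 1) 0

open Real Set Finset

section TopK

variable {V : Type*} [Fintype V] (p : V → ℝ)

lemma kthLargest_eq_getElem {l : List V} (hperm : l.Perm univ.toList)
    (hsorted : l.Pairwise fun a b => p b ≤ p a) {k : ℕ} (hk : k - 1 < l.length) :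
    kthLargest p k = p l[k - 1] := by
  have hmap : (univ.val.map p).sort (· ≥ ·) = l.map p := by
    refine List.Perm.eq_of_pairwise' (r := (· ≥ ·)) (Multiset.pairwise_sort _ _)
      (hsorted.map p fun _ _ h => h) ?_
    rw [← Multiset.coe_eq_coe, Multiset.sort_eq, ← Multiset.map_coe,
      Multiset.coe_eq_coe.2 hperm, coe_toList]
  rw [kthLargest, hmap, List.getD_eq_getElem _ _ (by simpa using hk), List.getElem_map]

lemma exists_card_eq_kthLargest_le {k : ℕ} (hk : 1 ≤ k) (hkV : k ≤ Fintype.card V) :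
    ∃ T : Finset V, #T = k ∧ (∀ u ∈ T, kthLargest p k ≤ p u) ∧
      ∀ w ∉ T, p w ≤ kthLargest p k := by
  classical
  let r : V → V → Prop := fun a b => p b ≤ p a
  have : Std.Total r := ⟨fun a b => le_total (p b) (p a)⟩
  have : IsTrans V r := ⟨fun _ _ _ h₁ h₂ => h₂.trans h₁⟩
  set l := univ.toList.insertionSort r
  have hperm : l.Perm univ.toList := List.perm_insertionSort r _
  have hsorted : l.Pairwise r := List.pairwise_insertionSort r _
  have hlen : l.length = Fintype.card V := by rw [hperm.length_eq, length_toList, card_univ]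
  have hk' : k - 1 < l.length := by omega
  have hP := kthLargest_eq_getElem p hperm hsorted hk'
  refine ⟨(l.take k).toFinset, ?_, ?_, ?_⟩
  · rw [List.toFinset_card_of_nodup ((hperm.nodup_iff.2 (nodup_toList _)).sublist
      (List.take_sublist _ _)), List.length_take, hlen, min_eq_left hkV]
  · intro u hu
    obtain ⟨i, hi, rfl⟩ := List.getElem_of_mem (List.mem_toFinset.1 hu)
    rw [List.length_take] at hi
    rw [hP, List.getElem_take]
    rcases (show i ≤ k - 1 by omega).lt_or_eq with h | rfl
    · exact List.pairwise_iff_getElem.1 hsorted i (k - 1) _ hk' h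
    · rfl
  · intro w hw
    obtain ⟨j, hj, rfl⟩ := List.getElem_of_mem (hperm.mem_iff.2 (mem_toList.2 (mem_univ w)))
    have hkj : k ≤ j := by
      by_contra! h
      have hmem : (l.take k)[j]'(by simp; omega) ∈ l.take k := List.getElem_mem _
      exact hw (List.mem_toFinset.2 (List.getElem_take ▸ hmem))
    rw [hP]
    exact List.pairwise_iff_getElem.1 hsorted (k - 1) j hk' hj (by omega)

end TopK

lemma sub_le_and_lt_add_of_card_eq_of_ordered {V : Type*} {p s : V → ℝ} {P ε : ℝ}
    {T R : Finset V} (hε : 0 < ε) (hT : ∀ u ∈ T, P ≤ p u) (hTc : ∀ w ∉ T, p w ≤ P)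
    (hord : ∀ u ∈ T, ∀ w ∉ T, ε ≤ p u - p w → s w < s u)
    (hcard : #R = #T) (hR : ∀ u ∈ R, ∀ w ∉ R, s w ≤ s u) :
    (∀ v ∈ R, P - ε ≤ p v) ∧ ∀ v ∉ R, p v < P + ε := by
  have hexists {A B : Finset V} (hAB : #A = #B) {v : V} (hvA : v ∈ A) (hvB : v ∉ B) :
      ∃ u ∈ B, u ∉ A :=
    Finset.not_subset.1 fun hBA => hvB (eq_of_subset_of_card_le hBA hAB.le ▸ hvA)
  constructor
  · intro v hvR
    by_contra! hv
    have hvT : v ∉ T := fun hvT => by linarith [hT v hvT]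
    obtain ⟨u, huT, huR⟩ := hexists hcard hvR hvT
    linarith [hord u huT v hvT (by linarith [hT u huT]), hR v hvR u huR]
  · intro v hvR
    by_contra! hv
    have hvT : v ∈ T := by_contra fun hvT => by linarith [hTc v hvT]
    obtain ⟨w, hwR, hwT⟩ := hexists hcard.symm hvT hvR
    linarith [hord v hvT w hwT (by linarith [hTc w hwT]), hR w hwR v hvR]

lemma measureReal_sum_nonpos_le_exp {Ω ι : Type*} [MeasurableSpace Ω] {μ : Measure Ω}
    [IsProbabilityMeasure μ] [Fintype ι] {Y : ι → Ω → ℝ} (hindep : iIndepFun Y μ)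
    (hmeas : ∀ i, AEMeasurable (Y i) μ) {a b : ℝ} (hY : ∀ i, ∀ᵐ ω ∂μ, Y i ω ∈ Icc a b)
    {m : ℝ} (hm : 0 ≤ m) (hmean : ∀ i, μ[Y i] = m) :
    μ.real {ω | ∑ i, Y i ω ≤ 0} ≤ exp (-(2 * Fintype.card ι * m ^ 2 / (b - a) ^ 2)) := by
  have hZ : ∀ i ∈ (univ : Finset ι),
      HasSubgaussianMGF (fun ω => m - Y i ω) ((‖-a - -b‖₊ / 2) ^ 2) μ := fun i _ =>
    (hasSubgaussianMGF_of_mem_Icc (hmeas i).neg <| by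
      filter_upwards [hY i] with ω hω using ⟨neg_le_neg hω.2, neg_le_neg hω.1⟩).congr <|
        ae_of_all _ fun ω => by simp [integral_neg, hmean, neg_add_eq_sub]
  have hZindep : iIndepFun (fun i ω => m - Y i ω) μ :=
    hindep.comp (fun _ x => m - x) (fun _ => by fun_prop)
  calc μ.real {ω | ∑ i, Y i ω ≤ 0}
      = μ.real {ω | Fintype.card ι * m ≤ ∑ i, (m - Y i ω)} := by simp [Finset.sum_sub_distrib]
    _ ≤ _ := HasSubgaussianMGF.measure_sum_ge_le_of_iIndepFun hZindep hZ (by positivity)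
    _ = _ := by
      congr 1
      simp only [sum_const, card_univ, nsmul_eq_mul, NNReal.coe_mul, NNReal.coe_natCast,
        NNReal.coe_pow, NNReal.coe_div, NNReal.coe_ofNat, coe_nnnorm, Real.norm_eq_abs]
      rw [neg_sub_neg, div_pow, sq_abs]
      rcases eq_or_ne (Fintype.card ι : ℝ) 0 with h | h
      · simp [h]
      · field_simp

lemma measureReal_sum_apply_le_sum_apply_le_exp {Ω ι V : Type*} [MeasurableSpace Ω]
    {μ : Measure Ω} [IsProbabilityMeasure μ] [Fintype ι] {X : ι → Ω → V → ℝ}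
    (hindep : iIndepFun X μ) (hmeas : ∀ i, Measurable (X i))
    (hrange : ∀ i, ∀ᵐ ω ∂μ, ∀ v, X i ω v ∈ Icc (0 : ℝ) 1) {p : V → ℝ}
    (hmean : ∀ i v, ∫ ω, X i ω v ∂μ = p v) {u w : V} (hwu : p w ≤ p u) :
    μ.real {ω | ∑ i, X i ω u ≤ ∑ i, X i ω w} ≤
      exp (-(Fintype.card ι * (p u - p w) ^ 2 / 2)) := by
  have hint (i : ι) (v : V) : Integrable (fun ω => X i ω v) μ :=
    Integrable.of_mem_Icc 0 1 (by fun_prop) (by filter_upwards [hrange i] with ω hω using hω v)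
  have h := measureReal_sum_nonpos_le_exp (Y := fun i ω => X i ω u - X i ω w) (a := -1) (b := 1)
    (hindep.comp (fun _ x => x u - x w) fun _ => by fun_prop) (fun _ => by fun_prop)
    (fun i => by
      filter_upwards [hrange i] with ω hω
      constructor <;> linarith [(hω u).1, (hω u).2, (hω w).1, (hω w).2])
    (sub_nonneg.2 hwu) (fun i => by rw [integral_sub (hint i u) (hint i w), hmean, hmean])
  convert h using 3
  · simp [Finset.sum_sub_distrib]
  · ring

lemma one_sub_card_mul_le_measureReal {Ω ι : Type*} [MeasurableSpace Ω] {μ : Measure Ω}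
    [IsProbabilityMeasure μ] {A : Set Ω} {s : Finset ι} {B : ι → Set Ω} {r : ℝ}
    (hA : Aᶜ ⊆ ⋃ i ∈ s, B i) (hB : ∀ i ∈ s, μ.real (B i) ≤ r) :
    1 - #s * r ≤ μ.real A := by
  have hunion : 1 ≤ μ.real A + μ.real Aᶜ := by
    simpa using measureReal_union_le (μ := μ) A Aᶜ
  have hsum : ∑ i ∈ s, μ.real (B i) ≤ #s * r := by
    simpa using sum_le_card_nsmul s _ r hB
  linarith [measureReal_mono (μ := μ) hA (measure_ne_top _ _),
    measureReal_biUnion_finset_le (μ := μ) s B]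

lemma exp_neg_mul_sq_div_two_le {C δ ε t : ℝ} (hC : 0 < C) (hδ : 0 < δ) (hε : 0 < ε)
    (ht : 2 / ε ^ 2 * log (C / δ) ≤ t) : exp (-(t * ε ^ 2 / 2)) ≤ δ / C := by
  have hlog : log (C / δ) ≤ t * ε ^ 2 / 2 := by
    rw [div_mul_eq_mul_div, div_le_iff₀ (by positivity)] at ht
    linarith
  calc exp (-(t * ε ^ 2 / 2)) ≤ exp (-log (C / δ)) := exp_le_exp.2 (neg_le_neg hlog)
    _ = δ / C := by rw [exp_neg, exp_log (by positivity), inv_div]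

theorem stmt2_general
    {V : Type*} [Fintype V]
    {Ω : Type*} [MeasureSpace Ω] [IsProbabilityMeasure (ℙ : Measure Ω)]
    (n k : ℕ) (hn : Fintype.card V = n) (hk : 1 ≤ k) (hkn : k < n)
    (p : V → ℝ)
    (ε δ : ℝ) (hε : ε ∈ Set.Ioo (0 : ℝ) 1) (hδ : δ ∈ Set.Ioo (0 : ℝ) 1)
    (t : ℕ) (X : Fin t → Ω → V → ℝ)
    (hmeas : ∀ i, Measurable (X i))
    (hindep : iIndepFun X ℙ)
    (hrange : ∀ i, ∀ᵐ ω ∂ℙ, ∀ v, X i ω v ∈ Set.Icc (0 : ℝ) 1)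
    (hmean : ∀ i v, ∫ ω, X i ω v ∂ℙ = p v)
    (ht : (2 / ε ^ 2) * Real.log ((k : ℝ) * ((n : ℝ) - (k : ℝ)) / δ) ≤ (t : ℝ)) :
    1 - δ ≤ (ℙ {ω | ∀ R : Finset V, R.card = k →
        (∀ u ∈ R, ∀ w ∉ R,
          (∑ i, X i ω w) / (t : ℝ) ≤ (∑ i, X i ω u) / (t : ℝ)) →
        (∀ v ∈ R, kthLargest p k - ε ≤ p v) ∧
        (∀ v ∉ R, p v < kthLargest p k + ε)}).toReal := by
  classical
  obtain ⟨hε0, -⟩ := hε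
  obtain ⟨hδ0, hδ1⟩ := hδ
  set C : ℝ := k * (n - k)
  have hC : 1 ≤ C := by
    have : (k : ℝ) + 1 ≤ n := by exact_mod_cast hkn
    have : (1 : ℝ) ≤ k := by exact_mod_cast hk
    nlinarith
  have hexp := exp_neg_mul_sq_div_two_le (by positivity) hδ0 hε0 ht
  have ht0 : (0 : ℝ) < t := by
    by_contra! h
    have : 1 ≤ exp (-(t * ε ^ 2 / 2)) := one_le_exp (by nlinarith [sq_nonneg ε])
    linarith [(div_lt_one (by positivity)).2 (hδ1.trans_le hC)]
  obtain ⟨T, hTcard, hT, hTc⟩ := exists_card_eq_kthLargest_le p hk (hn ▸ hkn.le)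
  set bad := (T ×ˢ Tᶜ).filter fun q => ε ≤ p q.1 - p q.2
  refine le_trans ?_ (one_sub_card_mul_le_measureReal (μ := ℙ) (s := bad)
    (B := fun q => {ω | ∑ i, X i ω q.1 ≤ ∑ i, X i ω q.2}) (r := δ / C) ?_ ?_)
  · have hbad : #bad ≤ k * (n - k) := by
      simpa [card_product, card_compl, hTcard, hn] using card_filter_le (T ×ˢ Tᶜ) _
    have : (#bad : ℝ) ≤ C := by
      simpa [C, Nat.cast_sub hkn.le] using (Nat.cast_le (α := ℝ)).2 hbad
    rw [sub_le_sub_iff_left, mul_div_assoc', div_le_iff₀ (by positivity)]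
    nlinarith
  · intro ω hω
    by_contra hω'
    simp only [mem_iUnion, exists_prop, not_exists, not_and, mem_ofPred_eq, not_le] at hω'
    refine hω fun R hR hRtop => sub_le_and_lt_add_of_card_eq_of_ordered hε0 hT hTc
      (fun u hu w hw huw => div_lt_div_of_pos_right (hω' (u, w) ?_) ht0)
      (hR.trans hTcard.symm) hRtop
    exact mem_filter.2 ⟨mem_product.2 ⟨hu, mem_compl.2 hw⟩, huw⟩
  · rintro ⟨u, w⟩ hq
    have huw : ε ≤ p u - p w := (mem_filter.1 hq).2
    refine (measureReal_sum_apply_le_sum_apply_le_exp hindep hmeas hrange hmean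
      (by linarith)).trans (le_trans ?_ hexp)
    rw [Fintype.card_fin]
    gcongr

/-- Theorem 4 of the paper: the basic sampling algorithm, which estimates each
node's default probability `p v` by the average `p̂ v` of `t` i.i.d. samples
in `[0,1]` and returns the `k` nodes with the largest estimates, is an
`(ε, δ)`-approximation when `t ≥ (2/ε²)·ln(k(n-k)/δ)`. -/
theorem stmt2
    {V : Type*} [Fintype V] [DecidableEq V]
    {Ω : Type*} [MeasureSpace Ω] [IsProbabilityMeasure (ℙ : Measure Ω)]
    (n k : ℕ) (hn : Fintype.card V = n) (hk : 1 ≤ k) (hkn : k < n)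
    (p : V → ℝ) (hp : ∀ v, p v ∈ Set.Icc (0 : ℝ) 1)
    (ε δ : ℝ) (hε : ε ∈ Set.Ioo (0 : ℝ) 1) (hδ : δ ∈ Set.Ioo (0 : ℝ) 1)
    (t : ℕ) (X : Fin t → Ω → V → ℝ)
    (hmeas : ∀ i, Measurable (X i))
    (hindep : iIndepFun X ℙ)
    (hident : ∀ i j, IdentDistrib (X i) (X j) ℙ ℙ)
    (hrange : ∀ i, ∀ᵐ ω ∂ℙ, ∀ v, X i ω v ∈ Set.Icc (0 : ℝ) 1)
    (hmean : ∀ i v, ∫ ω, X i ω v ∂ℙ = p v)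
    (ht : (2 / ε ^ 2) * Real.log ((k : ℝ) * ((n : ℝ) - (k : ℝ)) / δ) ≤ (t : ℝ)) :
    1 - δ ≤ (ℙ {ω | ∀ R : Finset V, R.card = k →
        (∀ u ∈ R, ∀ w ∉ R,
          (∑ i, X i ω w) / (t : ℝ) ≤ (∑ i, X i ω u) / (t : ℝ)) →
        (∀ v ∈ R, kthLargest p k - ε ≤ p v) ∧
        (∀ v ∉ R, p v < kthLargest p k + ε)}).toReal :=
  stmt2_general n k hn hk hkn p ε δ hε hδ t X hmeas hindep hrange hmean ht
end

section
/- Let V be a finite set, k a positive integer with k ≤ |V|, and let p_l, p, p_u : V → ℝ satisfy p_l(v) ≤ p(v) ≤ p_u(v) for every v ∈ V. Let T_u denote the k-th largest value of p_u over V. If a node u ∈ V satisfies p_l(u) ≥ T_u, then u must be in the top-k by true value; precisely, the number of nodes w ∈ V with p(w) > p(u) is strictly less than k. -/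
theorem List.countP_getElem_lt_le_of_pairwise_ge {α : Type*} [LinearOrder α] {l : List α}
    (hl : l.Pairwise (· ≥ ·)) {i : ℕ} (hi : i < l.length) :
    l.countP (fun x => l[i] < x) ≤ i := by
  have hdrop : (l.drop i).countP (fun x => l[i] < x) = 0 := by
    have hsorted := hl.drop (i := i)
    rw [List.drop_eq_getElem_cons hi, List.pairwise_cons] at hsorted
    rw [List.countP_eq_zero, List.drop_eq_getElem_cons hi]
    simp only [List.mem_cons, decide_eq_true_eq, not_lt]
    rintro x (rfl | hx)
    · exact le_rfl
    · exact hsorted.1 x hx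
  calc l.countP (fun x => l[i] < x)
      = (l.take i).countP (fun x => l[i] < x) := by
        rw [← add_zero ((l.take i).countP _), ← hdrop, ← List.countP_append,
          List.take_append_drop]
    _ ≤ (l.take i).length := List.countP_le_length
    _ ≤ i := List.length_take_le i l

theorem card_filter_kthLargest_lt_lt {V : Type*} [Fintype V] (f : V → ℝ) {k : ℕ} (hk : 1 ≤ k) :
    (Finset.univ.filter (fun w => kthLargest f k < f w)).card < k := by
  rcases lt_or_ge (Fintype.card V) k with hcard | hkcard
  · exact (Finset.card_le_univ _).trans_lt hcard
  set l := (Finset.univ.val.map f).sort (· ≥ ·) with hl_def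
  have hk1 : k - 1 < l.length := by
    rw [hl_def, Multiset.length_sort, Multiset.card_map]
    exact lt_of_lt_of_le (by omega) hkcard
  have hT : kthLargest f k = l[k - 1] := List.getD_eq_getElem _ _ hk1
  have hcount : (Finset.univ.filter (fun w => kthLargest f k < f w)).card
      = l.countP (fun x => kthLargest f k < x) := by
    rw [hl_def, ← Multiset.coe_countP, Multiset.sort_eq, Multiset.countP_map]
    rfl
  rw [hcount, hT]
  exact (List.countP_getElem_lt_le_of_pairwise_ge (Multiset.pairwise_sort _ _) hk1).trans_lt
    (by omega)

theorem stmt3_general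
    {V : Type*} [Fintype V]
    (k : ℕ) (hk : 1 ≤ k)
    (pl p pu : V → ℝ)
    (hl : ∀ v, pl v ≤ p v) (hu : ∀ v, p v ≤ pu v)
    (u : V) (hcond : kthLargest pu k ≤ pl u) :
    (Finset.univ.filter (fun w => p u < p w)).card < k := by
  refine (Finset.card_le_card fun w hw => ?_).trans_lt (card_filter_kthLargest_lt_lt pu hk)
  simp only [Finset.mem_filter, Finset.mem_univ, true_and] at hw ⊢
  calc kthLargest pu k ≤ pl u := hcond
    _ ≤ p u := hl u
    _ < p w := hw
    _ ≤ pu w := hu w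

/-- First pruning rule of Lemma 1 of the paper: if `p_l ≤ p ≤ p_u` pointwise
and a node `u` satisfies `p_l(u) ≥ T_u`, where `T_u` is the `k`-th largest
value of `p_u`, then `u` must be in the top-`k` by true value: fewer than `k`
nodes have strictly larger true value. -/
theorem stmt3
    {V : Type*} [Fintype V] [DecidableEq V]
    (k : ℕ) (hk : 1 ≤ k) (hkcard : k ≤ Fintype.card V)
    (pl p pu : V → ℝ)
    (hl : ∀ v, pl v ≤ p v) (hu : ∀ v, p v ≤ pu v)
    (u : V) (hcond : kthLargest pu k ≤ pl u) :
    (Finset.univ.filter (fun w => p u < p w)).card < k :=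
  stmt3_general k hk pl p pu hl hu u hcond
end

section
/- Let V be a finite set of nodes, p_s : V → [0,1], N(v) ⊆ V, w(x, v) ∈ [0,1], and define F(q)(v) = 1 − (1 − p_s(v)) · ∏_{x ∈ N(v)} (1 − w(x, v)·q(x)). Define the lower-bound iterates by q_1 = p_s and q_{i+1} = F(q_i) for i ≥ 1. Then for every i ≥ 1 and every v ∈ V, one has 0 ≤ q_i(v) ≤ q_{i+1}(v) ≤ 1; that is, the lower bounds produced by the lower-bound algorithm are nondecreasing in the order i (a larger order yields a tighter lower bound). -/
/-- One step of the default-probability recursion (Equation (1) of the paper):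
`F(q)(v) = 1 − (1 − p_s(v)) · ∏_{x ∈ N(v)} (1 − w(x,v)·q(x))`. -/
noncomputable def F {V : Type*} (ps : V → ℝ) (N : V → Finset V) (w : V → V → ℝ)
    (q : V → ℝ) (v : V) : ℝ :=
  1 - (1 - ps v) * ∏ x ∈ N v, (1 - w x v * q x)

section Aux

variable {V : Type*} (ps : V → ℝ) (N : V → Finset V) (w : V → V → ℝ)

lemma prod_mem_Icc (hw : ∀ v, ∀ x ∈ N v, w x v ∈ Set.Icc (0 : ℝ) 1)
    (q : V → ℝ) (hq : ∀ x, 0 ≤ q x ∧ q x ≤ 1) (v : V) :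
    (∏ x ∈ N v, (1 - w x v * q x)) ∈ Set.Icc (0 : ℝ) 1 := by
  constructor
  · apply Finset.prod_nonneg
    intro x hx
    have hwx := hw v x hx
    have := (hq x)
    nlinarith [hwx.1, hwx.2, this.1, this.2]
  · apply Finset.prod_le_one
    · intro x hx
      have hwx := hw v x hx
      have := hq x
      nlinarith [hwx.1, hwx.2, this.1, this.2]
    · intro x hx
      have hwx := hw v x hx
      have := hq x
      nlinarith [hwx.1, this.1]

lemma F_mem_Icc (hps : ∀ v, ps v ∈ Set.Icc (0 : ℝ) 1)
    (hw : ∀ v, ∀ x ∈ N v, w x v ∈ Set.Icc (0 : ℝ) 1)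
    (q : V → ℝ) (hq : ∀ x, 0 ≤ q x ∧ q x ≤ 1) (v : V) :
    0 ≤ F ps N w q v ∧ F ps N w q v ≤ 1 := by
  have hp := prod_mem_Icc N w hw q hq v
  have hpsv := hps v
  unfold F
  constructor
  · nlinarith [hp.1, hp.2, hpsv.1, hpsv.2]
  · nlinarith [hp.1, hp.2, hpsv.1, hpsv.2]

lemma F_mono (hps : ∀ v, ps v ∈ Set.Icc (0 : ℝ) 1)
    (hw : ∀ v, ∀ x ∈ N v, w x v ∈ Set.Icc (0 : ℝ) 1)
    (q q' : V → ℝ) (hq : ∀ x, 0 ≤ q x ∧ q x ≤ 1) (hq' : ∀ x, 0 ≤ q' x ∧ q' x ≤ 1)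
    (hle : ∀ x, q x ≤ q' x) (v : V) : F ps N w q v ≤ F ps N w q' v := by
  have hprod : (∏ x ∈ N v, (1 - w x v * q' x)) ≤ ∏ x ∈ N v, (1 - w x v * q x) := by
    apply Finset.prod_le_prod
    · intro x hx
      have hwx := hw v x hx
      have := hq' x
      nlinarith [hwx.1, hwx.2, this.1, this.2]
    · intro x hx
      have hwx := hw v x hx
      nlinarith [hwx.1, hle x]
  have hpsv := hps v
  unfold F
  nlinarith [hpsv.1, hpsv.2]

lemma ps_le_F (hps : ∀ v, ps v ∈ Set.Icc (0 : ℝ) 1)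
    (hw : ∀ v, ∀ x ∈ N v, w x v ∈ Set.Icc (0 : ℝ) 1)
    (q : V → ℝ) (hq : ∀ x, 0 ≤ q x ∧ q x ≤ 1) (v : V) :
    ps v ≤ F ps N w q v := by
  have hp := prod_mem_Icc N w hw q hq v
  have hpsv := hps v
  unfold F
  nlinarith [hp.1, hp.2, hpsv.1, hpsv.2]

end Aux

/-- The lower-bound iterates of Algorithm 2 of the paper, `q_1 = p_s` and
`q_{i+1} = F(q_i)`, are nondecreasing in the order `i` and stay in `[0,1]`:
for every `i ≥ 1` and every node `v`, `0 ≤ q_i(v) ≤ q_{i+1}(v) ≤ 1`. -/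
theorem stmt8
    {V : Type*} (ps : V → ℝ) (hps : ∀ v, ps v ∈ Set.Icc (0 : ℝ) 1)
    (N : V → Finset V) (w : V → V → ℝ)
    (hw : ∀ v, ∀ x ∈ N v, w x v ∈ Set.Icc (0 : ℝ) 1)
    (q : ℕ → V → ℝ) (hq1 : q 1 = ps)
    (hqs : ∀ i, 1 ≤ i → q (i + 1) = F ps N w (q i)) :
    ∀ i, 1 ≤ i → ∀ v, 0 ≤ q i v ∧ q i v ≤ q (i + 1) v ∧ q (i + 1) v ≤ 1 := by
  -- main invariant: q i ∈ [0,1] and q i ≤ q (i+1)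
  have key : ∀ i, 1 ≤ i →
      (∀ v, 0 ≤ q i v ∧ q i v ≤ 1) ∧ (∀ v, q i v ≤ q (i + 1) v) := by
    intro i hi
    induction i with
    | zero => omega
    | succ n ih =>
      rcases Nat.eq_or_lt_of_le hi with h1 | h1
      · -- n + 1 = 1
        have hn0 : n = 0 := by omega
        subst hn0
        have hbox : ∀ v, 0 ≤ q 1 v ∧ q 1 v ≤ 1 := by
          intro v; rw [hq1]; exact ⟨(hps v).1, (hps v).2⟩
        refine ⟨hbox, fun v => ?_⟩
        rw [hqs 1 le_rfl, hq1]
        exact ps_le_F ps N w hps hw ps (fun x => ⟨(hps x).1, (hps x).2⟩) v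
      · have hn : 1 ≤ n := by omega
        obtain ⟨hbox, hmono⟩ := ih hn
        have hbox' : ∀ v, 0 ≤ q (n + 1) v ∧ q (n + 1) v ≤ 1 := by
          intro v
          rw [hqs n hn]
          exact F_mem_Icc ps N w hps hw (q n) hbox v
        refine ⟨hbox', fun v => ?_⟩
        rw [hqs n hn, hqs (n + 1) (by omega)]
        exact F_mono ps N w hps hw (q n) (q (n + 1)) hbox hbox' hmono v
  intro i hi v
  obtain ⟨hbox, hmono⟩ := key i hi
  have hbox' := (key (i + 1) (by omega)).1
  exact ⟨(hbox v).1, hmono v, (hbox' v).2⟩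
end

section
/- Let V be a finite set of nodes, p_s : V → [0,1], N(v) ⊆ V, w(x, v) ∈ [0,1], and define F(q)(v) = 1 − (1 − p_s(v)) · ∏_{x ∈ N(v)} (1 − w(x, v)·q(x)). Let q_1 = p_s, q_{i+1} = F(q_i), and r_1 = F(𝟙), r_{i+1} = F(r_i). Suppose p : V → [0,1] is any fixed point of F, i.e., p(v) = 1 − (1 − p_s(v))·∏_{x ∈ N(v)}(1 − w(x, v)·p(x)) for every v ∈ V. Then for every order i ≥ 1 and every v ∈ V, q_i(v) ≤ p(v) ≤ r_i(v); that is, the iterates of the lower- and upper-bound algorithms are valid lower and upper bounds for the true default probabilities. -/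
lemma F_mono_s11 {V : Type*} (ps : V → ℝ) (hps : ∀ v, ps v ∈ Set.Icc (0 : ℝ) 1)
    (N : V → Finset V) (w : V → V → ℝ)
    (hw : ∀ v, ∀ x ∈ N v, w x v ∈ Set.Icc (0 : ℝ) 1)
    (a b : V → ℝ) (hab : ∀ v, a v ≤ b v) (ha0 : ∀ v, 0 ≤ a v) (hb1 : ∀ v, b v ≤ 1) :
    ∀ v, F ps N w a v ≤ F ps N w b v := by
  intro v
  unfold F
  have hprod : (∏ x ∈ N v, (1 - w x v * b x)) ≤ ∏ x ∈ N v, (1 - w x v * a x) := by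
    apply Finset.prod_le_prod
    · intro x hx
      have hwx := hw v x hx
      have : w x v * b x ≤ 1 * 1 :=
        mul_le_mul hwx.2 (hb1 x) (le_trans (ha0 x) (hab x)) zero_le_one
      linarith
    · intro x hx
      have hwx := hw v x hx
      have := mul_le_mul_of_nonneg_left (hab x) hwx.1
      linarith
  have h1 : 0 ≤ 1 - ps v := by have := (hps v).2; linarith
  nlinarith [mul_le_mul_of_nonneg_left hprod h1]

lemma F_mem {V : Type*} (ps : V → ℝ) (hps : ∀ v, ps v ∈ Set.Icc (0 : ℝ) 1)
    (N : V → Finset V) (w : V → V → ℝ)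
    (hw : ∀ v, ∀ x ∈ N v, w x v ∈ Set.Icc (0 : ℝ) 1)
    (a : V → ℝ) (ha : ∀ v, a v ∈ Set.Icc (0 : ℝ) 1) :
    ∀ v, F ps N w a v ∈ Set.Icc (0 : ℝ) 1 := by
  intro v
  unfold F
  have hfac : ∀ x ∈ N v, (0 : ℝ) ≤ 1 - w x v * a x ∧ 1 - w x v * a x ≤ 1 := by
    intro x hx
    have hwx := hw v x hx
    have hax := ha x
    constructor
    · have : w x v * a x ≤ 1 * 1 := mul_le_mul hwx.2 hax.2 hax.1 zero_le_one
      linarith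
    · nlinarith [mul_nonneg hwx.1 hax.1]
  have h0 : (0 : ℝ) ≤ ∏ x ∈ N v, (1 - w x v * a x) :=
    Finset.prod_nonneg fun x hx => (hfac x hx).1
  have h1 : (∏ x ∈ N v, (1 - w x v * a x)) ≤ 1 :=
    Finset.prod_le_one (fun x hx => (hfac x hx).1) (fun x hx => (hfac x hx).2)
  obtain ⟨hps0, hps1⟩ := hps v
  have hA : (0:ℝ) ≤ (1 - ps v) * ∏ x ∈ N v, (1 - w x v * a x) :=
    mul_nonneg (by linarith) h0
  have hB : (1 - ps v) * (∏ x ∈ N v, (1 - w x v * a x)) ≤ 1 * 1 :=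
    mul_le_mul (by linarith) h1 h0 zero_le_one
  constructor
  · linarith
  · linarith

/-- If `p : V → [0,1]` is a fixed point of `F` (i.e. the true default
probabilities solving Equation (1) of the paper), then at every order `i ≥ 1`
the lower-bound iterates `q_i` (Algorithm 2) and upper-bound iterates `r_i`
(Algorithm 3) sandwich it: `q_i(v) ≤ p(v) ≤ r_i(v)` for every node `v`. -/
theorem stmt11
    {V : Type*} (ps : V → ℝ) (hps : ∀ v, ps v ∈ Set.Icc (0 : ℝ) 1)
    (N : V → Finset V) (w : V → V → ℝ)
    (hw : ∀ v, ∀ x ∈ N v, w x v ∈ Set.Icc (0 : ℝ) 1)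
    (q : ℕ → V → ℝ) (hq1 : q 1 = ps)
    (hqs : ∀ i, 1 ≤ i → q (i + 1) = F ps N w (q i))
    (r : ℕ → V → ℝ) (hr1 : r 1 = F ps N w (fun _ => 1))
    (hrs : ∀ i, 1 ≤ i → r (i + 1) = F ps N w (r i))
    (p : V → ℝ) (hp : ∀ v, p v ∈ Set.Icc (0 : ℝ) 1)
    (hfix : ∀ v, p v = F ps N w p v) :
    ∀ i, 1 ≤ i → ∀ v, q i v ≤ p v ∧ p v ≤ r i v := by
  -- strengthened induction: q i ∈ [0,1], r i ∈ [0,1], and sandwich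
  suffices h : ∀ i, 1 ≤ i → ∀ v,
      (0 ≤ q i v ∧ q i v ≤ p v) ∧ (p v ≤ r i v ∧ r i v ≤ 1) by
    intro i hi v
    exact ⟨((h i hi v).1).2, ((h i hi v).2).1⟩
  intro i
  induction i with
  | zero => intro h; omega
  | succ n ih =>
    intro _ v
    rcases Nat.eq_or_lt_of_le (Nat.one_le_iff_ne_zero.mpr (Nat.succ_ne_zero n))
      with h | h
    · -- base case n + 1 = 1, i.e. n = 0
      have hn : n = 0 := by omega
      subst hn
      rw [hq1, hr1]
      refine ⟨⟨(hps v).1, ?_⟩, ?_, ?_⟩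
      · -- ps v ≤ p v
        rw [hfix v]
        unfold F
        have hfac : ∀ x ∈ N v, (0 : ℝ) ≤ 1 - w x v * p x := by
          intro x hx
          have hwx := hw v x hx
          have hpx := hp x
          have : w x v * p x ≤ 1 * 1 := mul_le_mul hwx.2 hpx.2 hpx.1 zero_le_one
          linarith
        have h1 : (∏ x ∈ N v, (1 - w x v * p x)) ≤ 1 :=
          Finset.prod_le_one hfac (fun x hx => by
            have hwx := hw v x hx
            have hpx := hp x
            nlinarith [mul_nonneg hwx.1 hpx.1])
        have h2 : 0 ≤ 1 - ps v := by have := (hps v).2; linarith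
        nlinarith
      · -- p v ≤ F(1) v
        rw [hfix v]
        exact F_mono_s11 ps hps N w hw p (fun _ => 1) (fun x => (hp x).2)
          (fun x => (hp x).1) (fun _ => le_refl 1) v
      · -- F(1) v ≤ 1
        exact (F_mem ps hps N w hw (fun _ => 1)
          (fun _ => ⟨zero_le_one, le_refl 1⟩) v).2
    · -- inductive step: n ≥ 1
      have hn : 1 ≤ n := by omega
      have IH := ih hn
      rw [hqs n hn, hrs n hn]
      have hq0 : ∀ x, 0 ≤ q n x := fun x => ((IH x).1).1
      have hqp : ∀ x, q n x ≤ p x := fun x => ((IH x).1).2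
      have hpr : ∀ x, p x ≤ r n x := fun x => ((IH x).2).1
      have hr1' : ∀ x, r n x ≤ 1 := fun x => ((IH x).2).2
      refine ⟨⟨?_, ?_⟩, ?_, ?_⟩
      · exact (F_mem ps hps N w hw (q n)
          (fun x => ⟨hq0 x, le_trans (hqp x) (hp x).2⟩) v).1
      · rw [hfix v]
        exact F_mono_s11 ps hps N w hw (q n) p hqp hq0 (fun x => (hp x).2) v
      · rw [hfix v]
        exact F_mono_s11 ps hps N w hw p (r n) hpr (fun x => (hp x).1) hr1' v
      · exact (F_mem ps hps N w hw (r n)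
          (fun x => ⟨le_trans (hp x).1 (hpr x), hr1' x⟩) v).2
end
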